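/- arXiv:2111.14784 — 3 statements merged into one kernel-verified Lean document; each statement's English description precedes it below -/
import Mathlib

section
/- Let G be an inverse limit of finite groups G_i with canonical projections π_i : G → G_i and connecting epimorphisms π_{ji} : G_j → G_i for j ≥ i. Let 𝓘 be the set of involutions (elements of order 2) of G, and suppose every δ ∈ 𝓘 is self-centralizing (its centralizer in G is {1, δ}). Let i be an index such that π_i(δ) ≠ 1 for all δ ∈ 𝓘. Then there exists j ≥ i such that for every δ ∈ 𝓘, the image under π_{ji} of the centralizer of π_j(δ) in G_j is exactly {1, π_i(δ)}. -/
/-!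
If no level `j` works, then for every `j` some involution `δ` has an element of the centralizer
of `π_j δ` mapping outside `{1, π_{i₀} δ}`; lifting it to `σ ∈ G` gives a pair `(δ, σ) ∈ G × G`
with `σ` commuting with `δ` modulo level `j` and `σ ∉ {1, δ}` modulo `i₀`. These sets of pairs
are closed (the `G i` are discrete) and decrease with `j`, so by compactness of `G × G` they
share a point. Its `σ` commutes with `δ` at every level, hence in `G`, contradicting that `δ`
is self-centralizing.
-/

/-- The inverse limit of the system `(G i, π)`, as a subgroup of the product. -/
def invLimit {ι : Type} [Preorder ι] (G : ι → Type) [∀ i, Group (G i)]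
    (π : ∀ ⦃i j : ι⦄, i ≤ j → G j →* G i) : Subgroup (∀ i, G i) where
  carrier := {x | ∀ (i j : ι) (h : i ≤ j), π h (x j) = x i}
  one_mem' := by intro i j h; simp
  mul_mem' := by intro x y hx hy i j h; simp [map_mul, hx i j h, hy i j h]
  inv_mem' := by intro x hx i j h; simp [map_inv, hx i j h]

/-- The canonical projection of the inverse limit to `G i`. -/
def invLimitProj {ι : Type} [Preorder ι] (G : ι → Type) [∀ i, Group (G i)]
    (π : ∀ ⦃i j : ι⦄, i ≤ j → G j →* G i) (i : ι) : invLimit G π →* G i :=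
  (Pi.evalMonoidHom G i).comp (invLimit G π).subtype

namespace invLimit

variable {ι : Type} [Preorder ι] {G : ι → Type} [∀ i, Group (G i)]
  {π : ∀ ⦃i j : ι⦄, i ≤ j → G j →* G i}

theorem map_proj {i j : ι} (h : i ≤ j) (x : invLimit G π) :
    π h (invLimitProj G π j x) = invLimitProj G π i x :=
  x.2 i j h

theorem ext_proj {x y : invLimit G π} (h : ∀ i, invLimitProj G π i x = invLimitProj G π i y) :
    x = y :=
  Subtype.ext (funext h)

theorem subset_image_centralizer {i j : ι} (hij : i ≤ j) (δ : invLimit G π) :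
    ({1, invLimitProj G π i δ} : Set (G i)) ⊆
      π hij '' {τ : G j | τ * invLimitProj G π j δ = invLimitProj G π j δ * τ} := by
  rintro x (rfl | rfl)
  · exact ⟨1, by simp, map_one _⟩
  · exact ⟨invLimitProj G π j δ, rfl, map_proj hij δ⟩

theorem continuous_proj [∀ i, TopologicalSpace (G i)] (i : ι) :
    Continuous (invLimitProj G π i) :=
  (continuous_apply i).comp continuous_subtype_val

section Discrete

variable [∀ i, TopologicalSpace (G i)] [∀ i, DiscreteTopology (G i)]

theorem isClosed : IsClosed (invLimit G π : Set (∀ i, G i)) := by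
  have : (invLimit G π : Set (∀ i, G i)) = ⋂ (i) (j) (h : i ≤ j), {x | π h (x j) = x i} := by
    ext x; simp [invLimit]
  rw [this]
  exact isClosed_iInter fun i => isClosed_iInter fun j => isClosed_iInter fun h =>
    isClosed_eq (continuous_of_discreteTopology.comp (continuous_apply j)) (continuous_apply i)

instance [∀ i, Finite (G i)] : CompactSpace (invLimit G π) :=
  isCompact_iff_compactSpace.mp isClosed.isCompact

end Discrete

end invLimit

section CentralizerWitnesses

open invLimit

variable {ι : Type} [Preorder ι] (G : ι → Type) [∀ i, Group (G i)]
  (π : ∀ ⦃i j : ι⦄, i ≤ j → G j →* G i)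

def centralizerWitnesses (i₀ j : ι) : Set (invLimit G π × invLimit G π) :=
  {p | p.1 ^ 2 = 1 ∧ invLimitProj G π i₀ p.1 ≠ 1 ∧
    invLimitProj G π j p.2 * invLimitProj G π j p.1 =
      invLimitProj G π j p.1 * invLimitProj G π j p.2 ∧
    invLimitProj G π i₀ p.2 ≠ 1 ∧ invLimitProj G π i₀ p.2 ≠ invLimitProj G π i₀ p.1}

variable {G π}

theorem centralizerWitnesses_antitone (i₀ : ι) : Antitone (centralizerWitnesses G π i₀) := by
  rintro j k hjk p ⟨h2, h1, hcomm, hσ1, hσδ⟩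
  refine ⟨h2, h1, ?_, hσ1, hσδ⟩
  simpa only [← map_proj hjk, ← map_mul] using congrArg (π hjk) hcomm

theorem isClosed_centralizerWitnesses [∀ i, TopologicalSpace (G i)]
    [∀ i, DiscreteTopology (G i)] (i₀ j : ι) : IsClosed (centralizerWitnesses G π i₀ j) := by
  have hne {H : Type} [TopologicalSpace H] [DiscreteTopology H]
      {f g : invLimit G π × invLimit G π → H} (hf : Continuous f) (hg : Continuous g) :
      IsClosed {p | f p ≠ g p} :=
    (isClosed_discrete {q : H × H | q.1 ≠ q.2}).preimage (hf.prodMk hg)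
  have hp (i : ι) : Continuous fun p : invLimit G π × invLimit G π => invLimitProj G π i p.1 :=
    (continuous_proj i).comp continuous_fst
  have hq (i : ι) : Continuous fun p : invLimit G π × invLimit G π => invLimitProj G π i p.2 :=
    (continuous_proj i).comp continuous_snd
  exact (isClosed_eq (continuous_fst.pow 2) continuous_const).inter <|
    (hne (hp i₀) continuous_const).inter <|
    (isClosed_eq ((hq j).mul (hp j)) ((hp j).mul (hq j))).inter <|
    (hne (hq i₀) continuous_const).inter (hne (hq i₀) (hp i₀))

theorem centralizerWitnesses_nonempty {i₀ k : ι} (hk : i₀ ≤ k)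
    (hsurj : Function.Surjective (invLimitProj G π k)) {δ : invLimit G π} (h2 : δ ^ 2 = 1)
    (h1 : invLimitProj G π i₀ δ ≠ 1)
    (hne : π hk '' {τ : G k | τ * invLimitProj G π k δ = invLimitProj G π k δ * τ} ≠
      {1, invLimitProj G π i₀ δ}) :
    (centralizerWitnesses G π i₀ k).Nonempty := by
  obtain ⟨_, ⟨t, htδ, rfl⟩, ht⟩ := Set.not_subset.mp fun hsub =>
    hne (hsub.antisymm (subset_image_centralizer hk δ))
  obtain ⟨σ, rfl⟩ := hsurj t
  simp only [Set.mem_insert_iff, Set.mem_singleton_iff, not_or, map_proj] at ht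
  exact ⟨(δ, σ), h2, h1, htδ, ht⟩

theorem iInter_centralizerWitnesses_eq_empty
    (hself : ∀ δ : invLimit G π, δ ^ 2 = 1 → δ ≠ 1 →
      ∀ σ : invLimit G π, σ * δ = δ * σ → σ = 1 ∨ σ = δ) (i₀ : ι) :
    ⋂ j, centralizerWitnesses G π i₀ j = ∅ := by
  refine Set.eq_empty_of_forall_notMem fun ⟨δ, σ⟩ hp => ?_
  rw [Set.mem_iInter] at hp
  obtain ⟨h2, h1, -, hσ1, hσδ⟩ := hp i₀
  have hcomm : σ * δ = δ * σ := ext_proj fun j => by simpa only [map_mul] using (hp j).2.2.1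
  have hδ : δ ≠ 1 := fun h => h1 (h ▸ map_one _)
  rcases hself δ h2 hδ σ hcomm with rfl | rfl
  · exact hσ1 (map_one _)
  · exact hσδ rfl

end CentralizerWitnesses

theorem exists_index_killing_centralizers_general {ι : Type} [Preorder ι]
    [IsDirected ι (· ≤ ·)]
    (G : ι → Type) [∀ i, Group (G i)] [∀ i, Finite (G i)]
    (π : ∀ ⦃i j : ι⦄, i ≤ j → G j →* G i)
    (hprojsurj : ∀ i, Function.Surjective (invLimitProj G π i))
    (hself : ∀ δ : invLimit G π, δ ^ 2 = 1 → δ ≠ 1 →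
      ∀ σ : invLimit G π, σ * δ = δ * σ → σ = 1 ∨ σ = δ)
    (i₀ : ι)
    (hi₀ : ∀ δ : invLimit G π, δ ^ 2 = 1 → δ ≠ 1 → invLimitProj G π i₀ δ ≠ 1) :
    ∃ j, ∃ hj : i₀ ≤ j, ∀ δ : invLimit G π, δ ^ 2 = 1 → δ ≠ 1 →
      (π hj) '' {τ : G j | τ * invLimitProj G π j δ = invLimitProj G π j δ * τ}
        = {1, invLimitProj G π i₀ δ} := by
  by_contra hcon
  push Not at hcon
  let _ : ∀ i, TopologicalSpace (G i) := fun _ => ⊥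
  have _ : ∀ i, DiscreteTopology (G i) := fun _ => ⟨rfl⟩
  have hnonempty : ∀ j, (centralizerWitnesses G π i₀ j).Nonempty := by
    intro j
    obtain ⟨k, hjk, hk⟩ := directed_of (· ≤ ·) j i₀
    obtain ⟨δ, h2, h1, hne⟩ := hcon k hk
    exact (centralizerWitnesses_nonempty hk (hprojsurj k) h2 (hi₀ δ h2 h1) hne).mono
      (centralizerWitnesses_antitone i₀ hjk)
  have hinter := IsCompact.nonempty_iInter_of_directed_nonempty_isCompact_isClosed
    (hι := ⟨i₀⟩) _ (centralizerWitnesses_antitone i₀).directed_ge hnonempty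
    (fun j => (isClosed_centralizerWitnesses i₀ j).isCompact) (isClosed_centralizerWitnesses i₀)
  rw [iInter_centralizerWitnesses_eq_empty hself] at hinter
  exact Set.not_nonempty_empty hinter

/-- Let `G = lim G i` be an inverse limit of finite groups in which every
involution is self-centralizing, and let `i₀` be an index such that no involution projects
to `1` in `G i₀`.  Then there is `j ≥ i₀` such that for every involution `δ`, the image
under `π_{j i₀}` of the centralizer of `π_j δ` in `G j` is exactly `{1, π_{i₀} δ}`. -/
theorem exists_index_killing_centralizers {ι : Type} [Preorder ι]
    [IsDirected ι (· ≤ ·)]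
    (G : ι → Type) [∀ i, Group (G i)] [∀ i, Finite (G i)]
    (π : ∀ ⦃i j : ι⦄, i ≤ j → G j →* G i)
    (hπid : ∀ i, π (le_refl i) = MonoidHom.id (G i))
    (hπcomp : ∀ (i j k : ι) (hij : i ≤ j) (hjk : j ≤ k),
      (π hij).comp (π hjk) = π (hij.trans hjk))
    (hπsurj : ∀ (i j : ι) (h : i ≤ j), Function.Surjective (π h))
    (hprojsurj : ∀ i, Function.Surjective (invLimitProj G π i))
    (hself : ∀ δ : invLimit G π, δ ^ 2 = 1 → δ ≠ 1 →
      ∀ σ : invLimit G π, σ * δ = δ * σ → σ = 1 ∨ σ = δ)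
    (i₀ : ι)
    (hi₀ : ∀ δ : invLimit G π, δ ^ 2 = 1 → δ ≠ 1 → invLimitProj G π i₀ δ ≠ 1) :
    ∃ j, ∃ hj : i₀ ≤ j, ∀ δ : invLimit G π, δ ^ 2 = 1 → δ ≠ 1 →
      (π hj) '' {τ : G j | τ * invLimitProj G π j δ = invLimitProj G π j δ * τ}
        = {1, invLimitProj G π i₀ δ} :=
  exists_index_killing_centralizers_general G π hprojsurj hself i₀ hi₀
end

section
/- Let G be a profinite group in which every involution is self-centralizing, and let N be an open normal subgroup such that no involution of G lies in N. Then there exists an open normal subgroup N' ≤ N such that for every involution δ of G, every element σ ∈ G with σδσ⁻¹δ⁻¹ ∈ N' satisfies σN ∈ {N, δN}, i.e., the image in G/N of the centralizer of the image of δ in G/N' is {1, δN}. -/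
/-!
The pairs `(δ, σ)` with `δ` an involution outside `N` and `σ ∉ N ∪ δN` form a closed, hence
compact, subset of `G × G` on which `⁅σ, δ⁆` never vanishes, because involutions are
self-centralizing. Its image under the commutator map is therefore a compact set avoiding `1`,
and in a profinite group the complement of a compact set avoiding `1` contains an open normal
subgroup `H`; then `N' = H ⊓ N` works.
-/

open scoped commutatorElement

section Profinite

variable {G X : Type*} [Group G] [TopologicalSpace G] [IsTopologicalGroup G] [CompactSpace G]
  [TotallyDisconnectedSpace G] [TopologicalSpace X]

theorem exists_openNormalSubgroup_forall_notMem_of_isCompact {C : Set X} (hC : IsCompact C)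
    {f : X → G} (hf : ContinuousOn f C) (hf1 : ∀ x ∈ C, f x ≠ 1) :
    ∃ H : OpenNormalSubgroup G, ∀ x ∈ C, f x ∉ H := by
  have himage : IsOpen (f '' C)ᶜ := (hC.image_of_continuousOn hf).isClosed.isOpen_compl
  have hone : (1 : G) ∈ (f '' C)ᶜ := by
    rintro ⟨x, hx, hfx⟩
    exact hf1 x hx hfx
  obtain ⟨H, hH⟩ := ProfiniteGrp.exist_openNormalSubgroup_sub_open_nhds_of_one himage hone
  exact ⟨H, fun x hx hfx => hH hfx ⟨x, hx, rfl⟩⟩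

end Profinite

theorem isClosed_setOf_involution_notMem_pair {G : Type*} [Group G] [TopologicalSpace G]
    [IsTopologicalGroup G] [T1Space G] {U : Set G} (hU : IsOpen U) :
    IsClosed {p : G × G | p.1 ^ 2 = 1 ∧ p.1 ∉ U ∧ p.2 ∉ U ∧ p.1⁻¹ * p.2 ∉ U} :=
  (isClosed_singleton.preimage (by fun_prop)).inter <|
    (hU.isClosed_compl.preimage continuous_fst).inter <|
      (hU.isClosed_compl.preimage continuous_snd).inter <|
        hU.isClosed_compl.preimage (by fun_prop)

theorem exists_open_normal_killing_centralizers_general (G : Type*) [Group G]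
    [TopologicalSpace G] [IsTopologicalGroup G] [CompactSpace G]
    [TotallyDisconnectedSpace G]
    (hself : ∀ δ : G, δ ^ 2 = 1 → δ ≠ 1 → ∀ σ : G, σ * δ = δ * σ → σ = 1 ∨ σ = δ)
    (N : Subgroup G) (hNnormal : N.Normal) (hNopen : IsOpen (N : Set G))
    (hNinv : ∀ δ : G, δ ^ 2 = 1 → δ ≠ 1 → δ ∉ N) :
    ∃ N' : Subgroup G, N'.Normal ∧ IsOpen ((N' : Set G)) ∧ N' ≤ N ∧
      ∀ δ : G, δ ^ 2 = 1 → δ ≠ 1 →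
        ∀ σ : G, σ * δ * σ⁻¹ * δ⁻¹ ∈ N' → (σ ∈ N ∨ δ⁻¹ * σ ∈ N) := by
  have hcomm : ∀ p ∈ {p : G × G | p.1 ^ 2 = 1 ∧ p.1 ∉ N ∧ p.2 ∉ N ∧ p.1⁻¹ * p.2 ∉ N},
      ⁅p.2, p.1⁆ ≠ 1 := by
    rintro ⟨δ, σ⟩ ⟨hδ2, hδN, hσN, hδσN⟩ hc
    have hδ1 : δ ≠ 1 := fun h => hδN (h ▸ N.one_mem)
    rcases hself δ hδ2 hδ1 σ (commutatorElement_eq_one_iff_mul_comm.mp hc) with rfl | rfl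
    · exact hσN N.one_mem
    · exact hδσN (by simp)
  obtain ⟨H, hH⟩ := exists_openNormalSubgroup_forall_notMem_of_isCompact
    (isClosed_setOf_involution_notMem_pair hNopen).isCompact
    (f := fun p : G × G => ⁅p.2, p.1⁆) (by simp only [commutatorElement_def]; fun_prop) hcomm
  refine ⟨H ⊓ N, Subgroup.normal_inf_normal _ _, H.isOpen'.inter hNopen, inf_le_right, ?_⟩
  intro δ hδ2 hδ1 σ hc
  by_contra! hσ
  exact hH (δ, σ) ⟨hδ2, hNinv δ hδ2 hδ1, hσ⟩ hc.1

/-- Let `G` be a profinite group in which every involution is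
self-centralizing, and `N` an open normal subgroup containing no involution of `G`.
Then there is an open normal subgroup `N' ≤ N` such that for every involution `δ` of `G`,
the image in `G/N` of the centralizer of the image of `δ` in `G/N'` is `{1, δN}`:
every `σ` commuting with `δ` modulo `N'` lies in `N ∪ δN`. -/
theorem exists_open_normal_killing_centralizers (G : Type*) [Group G]
    [TopologicalSpace G] [IsTopologicalGroup G] [CompactSpace G] [T2Space G]
    [TotallyDisconnectedSpace G]
    (hself : ∀ δ : G, δ ^ 2 = 1 → δ ≠ 1 → ∀ σ : G, σ * δ = δ * σ → σ = 1 ∨ σ = δ)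
    (N : Subgroup G) (hNnormal : N.Normal) (hNopen : IsOpen (N : Set G))
    (hNinv : ∀ δ : G, δ ^ 2 = 1 → δ ≠ 1 → δ ∉ N) :
    ∃ N' : Subgroup G, N'.Normal ∧ IsOpen ((N' : Set G)) ∧ N' ≤ N ∧
      ∀ δ : G, δ ^ 2 = 1 → δ ≠ 1 →
        ∀ σ : G, σ * δ * σ⁻¹ * δ⁻¹ ∈ N' → (σ ∈ N ∨ δ⁻¹ * σ ∈ N) :=
  exists_open_normal_killing_centralizers_general G hself N hNnormal hNopen hNinv
end

section
/- Let K be a field of characteristic 0 and L/K a finite Galois extension. Then there exists a finite Galois extension L' of K containing L such that for every real involution ε ∈ Gal(L'/K) (i.e., ε of order 2 whose fixed field in L' is formally real), the image under res_{L'/L} of the centralizer of ε in Gal(L'/K) is {1, res_{L'/L}(ε)}. -/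
/-- An ordering of the field `K`, given by its cone `P` of elements `≥ 0`:
closed under addition and multiplication, `P ∪ -P = K`, and `-1 ∉ P`. -/
def IsOrderingCone (K : Type*) [Field K] (P : Set K) : Prop :=
  (∀ x ∈ P, ∀ y ∈ P, x + y ∈ P) ∧ (∀ x ∈ P, ∀ y ∈ P, x * y ∈ P) ∧
  (∀ x : K, x ∈ P ∨ -x ∈ P) ∧ (-1 : K) ∉ P

/-- A field is formally real if it admits an ordering. -/
def IsFormallyRealField (K : Type*) [Field K] : Prop :=
  ∃ P : Set K, IsOrderingCone K P

open IntermediateField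

/-- In a formally real field, `-1` is not a sum of two squares. -/
lemma IsFormallyRealField.sum_two_sq_ne_neg_one {F : Type*} [Field F]
    (h : IsFormallyRealField F) (u v : F) : u ^ 2 + v ^ 2 ≠ -1 := by
  obtain ⟨P, hadd, hmul, htot, hneg⟩ := h
  have hsq : ∀ x : F, x ^ 2 ∈ P := by
    intro x
    rcases htot x with hx | hx
    · have := hmul x hx x hx; rwa [← sq] at this
    · have := hmul _ hx _ hx; rwa [neg_mul_neg, ← sq] at this
  intro hcon
  exact hneg (hcon ▸ hadd _ (hsq u) _ (hsq v))

set_option maxHeartbeats 3200000 in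
/-- Let `K` be a field of characteristic `0` and `L/K` a finite Galois
extension (inside an algebraic closure `Ω` of `K`).  Then there is a finite Galois
extension `L'` of `K` containing `L` such that for every real involution
`ε ∈ Gal(L'/K)` the image under restriction to `L` of the centralizer of `ε` in
`Gal(L'/K)` is `{1, ε|_L}`. -/
theorem exists_extension_killing_centralizers_of_real_involutions
    (K Ω : Type*) [Field K] [CharZero K] [Field Ω] [Algebra K Ω] [IsAlgClosure K Ω]
    (L : IntermediateField K Ω) [FiniteDimensional K ↥L] [IsGalois K ↥L] :
    ∃ (L' : IntermediateField K Ω) (hLL' : L ≤ L'),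
      FiniteDimensional K ↥L' ∧ IsGalois K ↥L' ∧
      ∀ ε : ↥L' ≃ₐ[K] ↥L', orderOf ε = 2 →
        IsFormallyRealField ↥(fixedField (Subgroup.zpowers ε)) →
        (∀ σ : ↥L' ≃ₐ[K] ↥L', σ * ε = ε * σ →
          ((∀ (x : Ω) (hx : x ∈ L), ((σ ⟨x, hLL' hx⟩ : ↥L') : Ω) = x) ∨
           (∀ (x : Ω) (hx : x ∈ L),
             ((σ ⟨x, hLL' hx⟩ : ↥L') : Ω) = ((ε ⟨x, hLL' hx⟩ : ↥L') : Ω)))) ∧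
        (∃ σ : ↥L' ≃ₐ[K] ↥L', σ * ε = ε * σ ∧
          ∀ (x : Ω) (hx : x ∈ L), ((σ ⟨x, hLL' hx⟩ : ↥L') : Ω) = x) ∧
        (∃ σ : ↥L' ≃ₐ[K] ↥L', σ * ε = ε * σ ∧
          ∀ (x : Ω) (hx : x ∈ L),
            ((σ ⟨x, hLL' hx⟩ : ↥L') : Ω) = ((ε ⟨x, hLL' hx⟩ : ↥L') : Ω)) := by
  classical
  have hΩalg : Algebra.IsAlgebraic K Ω := IsAlgClosure.isAlgebraic
  haveI : IsAlgClosed Ω := IsAlgClosure.isAlgClosed (R := K)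
  obtain ⟨θ, hθ⟩ := Field.exists_primitive_element K ↥L
  have hθint : IsIntegral K θ := IsIntegral.of_finite K θ
  set p : Polynomial K := minpoly K θ with hp
  have hpne : p ≠ 0 := minpoly.ne_zero hθint
  -- conjugates of θ in Ω lying in L, and sets of sums/products and differences
  set T : Set Ω := {x | x ∈ L ∧ Polynomial.aeval x p = 0} with hT
  set S : Set Ω := {x | ∃ a ∈ T, ∃ b ∈ T, x = a + b ∨ x = a * b} with hS
  set D : Set Ω := {x | ∃ a ∈ S, ∃ b ∈ S, x = a - b} with hD
  have hTfin : T.Finite := by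
    apply Set.Finite.subset (p.rootSet_finite Ω)
    intro x hx
    rw [Polynomial.mem_rootSet]
    exact ⟨hpne, hx.2⟩
  have hSfin : S.Finite := by
    have h1 : S ⊆ ((fun q : Ω × Ω => q.1 + q.2) '' (T ×ˢ T)) ∪
        ((fun q : Ω × Ω => q.1 * q.2) '' (T ×ˢ T)) := by
      rintro x ⟨a, ha, b, hb, (rfl | rfl)⟩
      · exact Or.inl ⟨(a, b), ⟨ha, hb⟩, rfl⟩
      · exact Or.inr ⟨(a, b), ⟨ha, hb⟩, rfl⟩
    exact Set.Finite.subset (((hTfin.prod hTfin).image _).union ((hTfin.prod hTfin).image _)) h1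
  have hDfin : D.Finite := by
    have h1 : D ⊆ (fun q : Ω × Ω => q.1 - q.2) '' (S ×ˢ S) := by
      rintro x ⟨a, ha, b, hb, rfl⟩; exact ⟨(a, b), ⟨ha, hb⟩, rfl⟩
    exact Set.Finite.subset ((hSfin.prod hSfin).image _) h1
  -- square roots in Ω
  have hsqex : ∀ x : Ω, ∃ y : Ω, y ^ 2 = x := fun x =>
    IsAlgClosed.exists_pow_nat_eq x (n := 2) (by norm_num)
  choose sqr hsqspec using hsqex
  -- the set we adjoin
  set A : Set Ω := insert (sqr (-1)) (sqr '' D) with hA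
  have hAfin : A.Finite := (hDfin.image sqr).insert _
  haveI : Finite ↥A := hAfin
  have hAint : ∀ x ∈ A, IsIntegral K x := fun x _ =>
    (Algebra.IsAlgebraic.isAlgebraic (R := K) x).isIntegral
  set E : IntermediateField K Ω := L ⊔ IntermediateField.adjoin K A with hE
  haveI : FiniteDimensional K ↥(IntermediateField.adjoin K A) :=
    IntermediateField.finiteDimensional_adjoin hAint
  haveI : FiniteDimensional K ↥E := IntermediateField.finiteDimensional_sup _ _
  set L' : IntermediateField K Ω := normalClosure K ↥E Ω with hL'
  haveI : Normal K ↥L' := normalClosure.normal K ↥E Ω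
  haveI : FiniteDimensional K ↥L' := normalClosure.is_finiteDimensional K ↥E Ω
  haveI : IsGalois K ↥L' := ⟨⟩
  have hEL' : E ≤ L' := IntermediateField.le_normalClosure E
  have hLL' : L ≤ L' := le_trans le_sup_left hEL'
  haveI hcharL' : CharZero ↥L' := charZero_of_injective_algebraMap (algebraMap K ↥L').injective
  have h2ne : (2 : ↥L') ≠ 0 := two_ne_zero
  haveI : Finite (↥L' ≃ₐ[K] ↥L') :=
    Finite.of_injective (fun f => (f : ↥L' →ₐ[K] ↥L')) AlgEquiv.coe_algHom_injective
  refine ⟨L', hLL', inferInstance, inferInstance, ?_⟩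
  intro ε hord hreal
  -- ε is an involution
  have hε2 : ∀ y : ↥L', ε (ε y) = y := by
    intro y
    have h1 : ε ^ 2 = 1 := by rw [← hord]; exact pow_orderOf_eq_one ε
    calc ε (ε y) = (ε * ε) y := rfl
    _ = (ε ^ 2) y := by rw [sq]
    _ = y := by rw [h1]; rfl
  -- membership in the fixed field
  have memF : ∀ x : ↥L', x ∈ fixedField (Subgroup.zpowers ε) ↔ ε x = x := by
    intro x
    constructor
    · intro hx
      exact hx ⟨ε, Subgroup.mem_zpowers ε⟩
    · intro hx g
      obtain ⟨g, hg⟩ := g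
      obtain ⟨k, rfl⟩ := hg
      show (ε ^ k) x = x
      have hnat : ∀ n : ℕ, (ε ^ n) x = x := by
        intro n
        induction n with
        | zero => rfl
        | succ n ih =>
          calc (ε ^ (n + 1)) x = (ε ^ n) (ε x) := by rw [pow_succ]; rfl
          _ = (ε ^ n) x := by rw [hx]
          _ = x := ih
      rcases k with n | n
      · simpa using hnat n
      · rw [zpow_negSucc]
        have h1 : (ε ^ (n + 1)) x = x := hnat (n + 1)
        calc ((ε ^ (n + 1))⁻¹) x = (ε ^ (n + 1))⁻¹ ((ε ^ (n + 1)) x) := by rw [h1]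
        _ = x := by
          rw [← AlgEquiv.mul_apply, inv_mul_cancel]
          rfl
  -- transporting to the fixed field: -1 is not a sum of two squares of ε-fixed elements
  have hnegone : ∀ c d : ↥L', ε c = c → ε d = d → c ^ 2 + d ^ 2 = -1 → False := by
    intro c d hc hd hcd
    apply hreal.sum_two_sq_ne_neg_one ⟨c, (memF c).2 hc⟩ ⟨d, (memF d).2 hd⟩
    apply Subtype.ext
    push_cast
    exact hcd
  have hsum3 : ∀ a b c : ↥L', ε a = a → ε b = b → ε c = c → a ≠ 0 →
      a ^ 2 + b ^ 2 + c ^ 2 = 0 → False := by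
    intro a b c ha hb hc ha0 h
    apply hnegone (b * a⁻¹) (c * a⁻¹)
    · rw [map_mul, map_inv₀, ha, hb]
    · rw [map_mul, map_inv₀, ha, hc]
    · field_simp
      linear_combination h
  -- the square root of -1
  have hJmem : sqr (-1) ∈ L' :=
    hEL' ((le_sup_right : adjoin K A ≤ E) (subset_adjoin K A (Set.mem_insert _ _)))
  set J : ↥L' := ⟨sqr (-1), hJmem⟩ with hJ
  have hJsq : J ^ 2 = (-1 : ↥L') := by
    apply Subtype.ext
    push_cast
    exact hsqspec (-1)
  have hJne : J ≠ 0 := by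
    intro h
    rw [h] at hJsq
    simp at hJsq
  have hεJ : ε J = -J := by
    have h1 : (ε J) ^ 2 = -1 := by rw [← map_pow, hJsq, map_neg, map_one]
    have h2 : (ε J - J) * (ε J + J) = 0 := by linear_combination h1 - hJsq
    rcases mul_eq_zero.1 h2 with h | h
    · exfalso
      have hfix : ε J = J := sub_eq_zero.mp h
      exact hnegone J 0 hfix (map_zero ε) (by rw [hJsq]; ring)
    · linear_combination h
  -- decomposition L' = F ⊕ F·J
  have hdecomp : ∀ x : ↥L', ∃ a b : ↥L', ε a = a ∧ ε b = b ∧ x = a + b * J := by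
    intro x
    refine ⟨(x + ε x) / 2, (x - ε x) / (2 * J), ?_, ?_, ?_⟩
    · rw [map_div₀, map_add, hε2, map_ofNat]
      ring
    · rw [map_div₀, map_sub, hε2, map_mul, map_ofNat, hεJ]
      rw [div_eq_div_iff (by simp [hJne, h2ne]) (by simp [hJne, h2ne])]
      ring
    · field_simp
      ring
  -- square roots available in L' of ε-fixed elements are (up to sign) squares of ε-fixed elements
  have hsqrtfix : ∀ d : ↥L', ε d = d → (∃ s : ↥L', s ^ 2 = d) →
      ∃ c : ↥L', ε c = c ∧ (c ^ 2 = d ∨ c ^ 2 = -d) := by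
    rintro d hd ⟨s, hs⟩
    obtain ⟨a, b, ha, hb, hab⟩ := hdecomp s
    have hd2 : d = a ^ 2 - b ^ 2 + (2 * a * b) * J := by
      rw [← hs, hab]
      linear_combination (b ^ 2) * hJsq
    have hεd : d = a ^ 2 - b ^ 2 - (2 * a * b) * J := by
      conv_lhs => rw [← hd, hd2]
      rw [map_add, map_sub, map_mul, map_mul, map_mul, map_pow, map_pow, map_ofNat,
        ha, hb, hεJ]
      ring
    have hab0 : a * b = 0 := by
      have h4 : (2 : ↥L') * ((2 * a * b) * J) = 0 := by linear_combination hεd - hd2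
      rcases mul_eq_zero.1 h4 with h | h
      · exact absurd h h2ne
      · rcases mul_eq_zero.1 h with h' | h'
        · have : (2 : ↥L') * (a * b) = 0 := by linear_combination h'
          rcases mul_eq_zero.1 this with h'' | h''
          · exact absurd h'' h2ne
          · exact h''
        · exact absurd h' hJne
    rcases mul_eq_zero.1 hab0 with h | h
    · refine ⟨b, hb, Or.inr ?_⟩
      rw [h] at hd2
      linear_combination hd2
    · refine ⟨a, ha, Or.inl ?_⟩
      rw [h] at hd2
      linear_combination -hd2
  -- every K-automorphism of L' maps (elements of) L to L
  have hmapL : ∀ (τ : ↥L' ≃ₐ[K] ↥L') (x : ↥L'), (x : Ω) ∈ L → ((τ x : ↥L') : Ω) ∈ L := by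
    intro τ x hx
    set f : ↥L →ₐ[K] Ω := (L'.val.comp (τ : ↥L' →ₐ[K] ↥L')).comp (inclusion hLL') with hf
    have hrange : f.fieldRange = L := AlgHom.fieldRange_of_normal f
    have hxeq : inclusion hLL' ⟨(x : Ω), hx⟩ = x := Subtype.ext rfl
    have hmem : f ⟨(x : Ω), hx⟩ ∈ f.fieldRange := ⟨_, rfl⟩
    rw [hrange] at hmem
    have : f ⟨(x : Ω), hx⟩ = ((τ x : ↥L') : Ω) := by
      rw [hf]
      simp only [AlgHom.coe_comp, Function.comp_apply, hxeq]
      rfl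
    rwa [this] at hmem
  -- automorphisms preserve T
  have haevalL' : ∀ t : ↥L', Polynomial.aeval (t : Ω) p = 0 → Polynomial.aeval t p = 0 := by
    intro t ht
    rw [IntermediateField.aeval_coe] at ht
    exact_mod_cast ht
  have hTmap : ∀ (τ : ↥L' ≃ₐ[K] ↥L') (t : ↥L'), (t : Ω) ∈ T → ((τ t : ↥L') : Ω) ∈ T := by
    rintro τ t ⟨htL, htp⟩
    refine ⟨hmapL τ t htL, ?_⟩
    have h1 : Polynomial.aeval t p = 0 := haevalL' t htp
    have h2 : Polynomial.aeval (τ t) p = 0 := by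
      have h3 := Polynomial.aeval_algHom_apply (τ : ↥L' →ₐ[K] ↥L') t p
      rw [h1, map_zero] at h3
      exact h3
    rw [IntermediateField.aeval_coe, h2]
    exact ZeroMemClass.coe_zero L'
  -- automorphisms preserve S
  have hSmap : ∀ (τ : ↥L' ≃ₐ[K] ↥L') (u : ↥L'), (u : Ω) ∈ S → ((τ u : ↥L') : Ω) ∈ S := by
    rintro τ u ⟨a, ha, b, hb, hab⟩
    have haL' : a ∈ L' := hLL' ha.1
    have hbL' : b ∈ L' := hLL' hb.1
    set ta : ↥L' := ⟨a, haL'⟩ with hta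
    set tb : ↥L' := ⟨b, hbL'⟩ with htb
    rcases hab with h | h
    · have hu : u = ta + tb := Subtype.ext (by push_cast; exact h)
      refine ⟨↑(τ ta), hTmap τ ta ha, ↑(τ tb), hTmap τ tb hb, Or.inl ?_⟩
      rw [hu, map_add]
      push_cast
      ring
    · have hu : u = ta * tb := Subtype.ext (by push_cast; exact h)
      refine ⟨↑(τ ta), hTmap τ ta ha, ↑(τ tb), hTmap τ tb hb, Or.inr ?_⟩
      rw [hu, map_mul]
      push_cast
      ring
  -- square roots of differences of elements of S exist in L'
  have hsqrtD : ∀ u v : ↥L', (u : Ω) ∈ S → (v : Ω) ∈ S → ∃ s : ↥L', s ^ 2 = u - v := by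
    intro u v hu hv
    have hd : ((u : Ω) - v) ∈ D := ⟨u, hu, v, hv, rfl⟩
    have hmem : sqr ((u : Ω) - (v : Ω)) ∈ L' :=
      hEL' ((le_sup_right : adjoin K A ≤ E)
        (subset_adjoin K A (Set.mem_insert_of_mem _ ⟨_, hd, rfl⟩)))
    refine ⟨⟨sqr ((u : Ω) - (v : Ω)), hmem⟩, Subtype.ext ?_⟩
    push_cast
    exact hsqspec _
  -- the order relation
  set R : ↥L' → ↥L' → Prop :=
    fun u v => u ≠ v ∧ ∃ c : ↥L', ε c = c ∧ c ^ 2 = v - u with hR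
  have hRasymm : ∀ u v, R u v → R v u → False := by
    rintro u v ⟨hne, c, hc, hc2⟩ ⟨-, e, he, he2⟩
    refine hsum3 c e 0 hc he (map_zero ε) ?_ ?_
    · intro h0
      rw [h0] at hc2
      apply hne
      have hvu : v - u = 0 := by linear_combination -hc2
      exact (sub_eq_zero.mp hvu).symm
    · linear_combination hc2 + he2
  have hRtot : ∀ u v : ↥L', (u : Ω) ∈ S → (v : Ω) ∈ S → ε u = u → ε v = v → u ≠ v →
      R u v ∨ R v u := by
    intro u v hu hv hεu hεv hne
    obtain ⟨s, hs⟩ := hsqrtD v u hv hu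
    have hfix : ε (v - u) = v - u := by rw [map_sub, hεu, hεv]
    obtain ⟨c, hc, hor⟩ := hsqrtfix (v - u) hfix ⟨s, hs⟩
    rcases hor with h | h
    · exact Or.inl ⟨hne, c, hc, h⟩
    · exact Or.inr ⟨hne.symm, c, hc, by rw [h]; ring⟩
  have hRtrans : ∀ u v w : ↥L', (u : Ω) ∈ S → (w : Ω) ∈ S → ε u = u → ε w = w →
      R u v → R v w → R u w := by
    rintro u v w hu hw hεu hεw ⟨hne1, c, hc, hc2⟩ ⟨hne2, e, he, he2⟩
    have hnuw : u ≠ w := by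
      rintro rfl
      exact hRasymm u v ⟨hne1, c, hc, hc2⟩ ⟨hne2, e, he, he2⟩
    rcases hRtot u w hu hw hεu hεw hnuw with h | h
    · exact h
    · exfalso
      obtain ⟨-, f, hf, hf2⟩ := h
      refine hsum3 c e f hc he hf ?_ ?_
      · intro h0
        rw [h0] at hc2
        apply hne1
        have hvu : v - u = 0 := by linear_combination -hc2
        exact (sub_eq_zero.mp hvu).symm
      · linear_combination hc2 + he2 + hf2
  -- primitive element of L inside L'
  set θ' : ↥L' := ⟨((θ : ↥L) : Ω), hLL' θ.2⟩ with hθ'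
  have hθ'T : ((θ' : ↥L') : Ω) ∈ T := by
    refine ⟨θ.2, ?_⟩
    show Polynomial.aeval ((θ : ↥L) : Ω) p = 0
    rw [IntermediateField.aeval_coe, hp, minpoly.aeval]
    exact ZeroMemClass.coe_zero L
  -- extension lemma: two automorphisms agreeing at θ' agree on L
  have hext : ∀ τ₁ τ₂ : ↥L' ≃ₐ[K] ↥L', τ₁ θ' = τ₂ θ' →
      ∀ (x : Ω) (hx : x ∈ L),
        ((τ₁ ⟨x, hLL' hx⟩ : ↥L') : Ω) = ((τ₂ ⟨x, hLL' hx⟩ : ↥L') : Ω) := by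
    intro τ₁ τ₂ hτ x hx
    set f₁ : ↥L →ₐ[K] Ω := (L'.val.comp (τ₁ : ↥L' →ₐ[K] ↥L')).comp (inclusion hLL') with hf₁
    set f₂ : ↥L →ₐ[K] Ω := (L'.val.comp (τ₂ : ↥L' →ₐ[K] ↥L')).comp (inclusion hLL') with hf₂
    have hagree : ∀ y : ↥L, f₁ y = f₂ y := by
      intro y
      have hy : y ∈ IntermediateField.adjoin K {θ} := by
        rw [hθ]
        trivial
      induction hy using IntermediateField.adjoin_induction with
      | mem z hz =>
        rcases Set.mem_singleton_iff.1 hz with rfl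
        show L'.val (τ₁ (inclusion hLL' z)) = L'.val (τ₂ (inclusion hLL' z))
        have hz' : inclusion hLL' z = θ' := Subtype.ext rfl
        rw [hz', hτ]
      | algebraMap z => simp [hf₁, hf₂]
      | add z w hz hw ihz ihw => rw [map_add, map_add, ihz, ihw]
      | inv z hz ihz => rw [map_inv₀, map_inv₀, ihz]
      | mul z w hz hw ihz ihw => rw [map_mul, map_mul, ihz, ihw]
    have hxeq : inclusion hLL' ⟨x, hx⟩ = (⟨x, hLL' hx⟩ : ↥L') := Subtype.ext rfl
    have h1 := hagree ⟨x, hx⟩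
    rw [hf₁, hf₂] at h1
    simp only [AlgHom.coe_comp, Function.comp_apply, hxeq] at h1
    exact h1
  refine ⟨?_, ⟨1, by rw [one_mul, mul_one], fun x hx => rfl⟩,
    ⟨ε, rfl, fun x hx => rfl⟩⟩
  -- the main part: the centralizer restricts to {1, ε|L}
  intro σ hcomm
  have hσε : ∀ x : ↥L', ε x = x → ε (σ x) = σ x := by
    intro x hx
    calc ε (σ x) = (ε * σ) x := rfl
    _ = (σ * ε) x := by rw [hcomm]
    _ = σ (ε x) := rfl
    _ = σ x := by rw [hx]
  have hRmono : ∀ u v, R u v → R (σ u) (σ v) := by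
    rintro u v ⟨hne, c, hc, hc2⟩
    exact ⟨fun h => hne (σ.injective h), σ c, hσε c hc,
      by rw [← map_sub, ← hc2, map_pow]⟩
  have hpowsucc : ∀ (n : ℕ) (u : ↥L'), (σ ^ (n + 1)) u = σ ((σ ^ n) u) := by
    intro n u
    rw [pow_succ']
    rfl
  have horb : ∀ u : ↥L', (u : Ω) ∈ S → ε u = u → σ u = u := by
    intro u hu hεu
    by_contra hne0
    have hSn : ∀ n : ℕ, (((σ ^ n) u : ↥L') : Ω) ∈ S := by
      intro n
      induction n with
      | zero => simpa using hu
      | succ n ih =>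
        rw [hpowsucc]
        exact hSmap σ _ ih
    have hFn : ∀ n : ℕ, ε ((σ ^ n) u) = (σ ^ n) u := by
      intro n
      induction n with
      | zero => simpa using hεu
      | succ n ih =>
        rw [hpowsucc]
        exact hσε _ ih
    have horder : 0 < orderOf σ := orderOf_pos σ
    have hσord : (σ ^ orderOf σ) u = u := by rw [pow_orderOf_eq_one]; rfl
    have hS1 : ((σ u : ↥L') : Ω) ∈ S := by simpa using hSn 1
    have hF1 : ε (σ u) = σ u := hσε u hεu
    rcases hRtot u (σ u) hu hS1 hεu hF1 (fun h => hne0 h.symm) with h | h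
    · have hchain : ∀ n : ℕ, R u ((σ ^ (n + 1)) u) := by
        intro n
        induction n with
        | zero => simpa using h
        | succ n ih =>
          have h2 : R (σ u) ((σ ^ (n + 2)) u) := by
            have h3 := hRmono _ _ ih
            rwa [← hpowsucc] at h3
          exact hRtrans u (σ u) ((σ ^ (n + 2)) u) hu (hSn (n + 2)) hεu (hFn (n + 2)) h h2
      have hfin := hchain (orderOf σ - 1)
      rw [Nat.sub_add_cancel horder, hσord] at hfin
      exact hfin.1 rfl
    · have hchain : ∀ n : ℕ, R ((σ ^ (n + 1)) u) u := by
        intro n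
        induction n with
        | zero => simpa using h
        | succ n ih =>
          have h2 : R ((σ ^ (n + 2)) u) (σ u) := by
            have h3 := hRmono _ _ ih
            rwa [← hpowsucc] at h3
          exact hRtrans ((σ ^ (n + 2)) u) (σ u) u (hSn (n + 2)) hu (hFn (n + 2)) hεu h2 h
      have hfin := hchain (orderOf σ - 1)
      rw [Nat.sub_add_cancel horder, hσord] at hfin
      exact hfin.1 rfl
  -- apply the orbit lemma to θ' + ε θ' and θ' * ε θ'
  have hεθT : ((ε θ' : ↥L') : Ω) ∈ T := hTmap ε θ' hθ'T
  set η : ↥L' := θ' + ε θ' with hηdef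
  set ζ : ↥L' := θ' * ε θ' with hζdef
  have hηS : ((η : ↥L') : Ω) ∈ S := by
    refine ⟨↑θ', hθ'T, ↑(ε θ'), hεθT, Or.inl ?_⟩
    rw [hηdef]
    push_cast
    ring
  have hζS : ((ζ : ↥L') : Ω) ∈ S := by
    refine ⟨↑θ', hθ'T, ↑(ε θ'), hεθT, Or.inr ?_⟩
    rw [hζdef]
    push_cast
    ring
  have hηF : ε η = η := by rw [hηdef, map_add, hε2]; ring
  have hζF : ε ζ = ζ := by rw [hζdef, map_mul, hε2]; ring
  have hση : σ η = η := horb η hηS hηF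
  have hσζ : σ ζ = ζ := horb ζ hζS hζF
  have hfactor : (σ θ' - θ') * (σ θ' - ε θ') = 0 := by
    have h0 : θ' ^ 2 - θ' * η + ζ = 0 := by rw [hηdef, hζdef]; ring
    have h1 : σ θ' ^ 2 - σ θ' * η + ζ = 0 := by
      calc σ θ' ^ 2 - σ θ' * η + ζ = σ (θ' ^ 2 - θ' * η + ζ) := by
            rw [map_add, map_sub, map_pow, map_mul, hση, hσζ]
      _ = 0 := by rw [h0, map_zero]
    rw [hηdef, hζdef] at h1
    linear_combination h1
  rcases mul_eq_zero.1 hfactor with h | h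
  · left
    have hσθ : σ θ' = θ' := sub_eq_zero.mp h
    intro x hx
    have := hext σ 1 (by rw [hσθ]; rfl) x hx
    rwa [AlgEquiv.one_apply] at this
  · right
    have hσθ : σ θ' = ε θ' := sub_eq_zero.mp h
    exact hext σ ε hσθ
end
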